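/- With H₃ as above, the six matrices (1/√2)U[[1,0],[0,1],[0,0]]Vᵀ, (1/√2)U[[0,-1],[1,0],[0,0]]Vᵀ, (1/√2)U[[1,0],[0,-1],[0,0]]Vᵀ, (1/√2)U[[0,1],[1,0],[0,0]]Vᵀ, U[[0,0],[0,0],[1,0]]Vᵀ, U[[0,0],[0,0],[0,1]]Vᵀ are eigenmatrices of H₃ with eigenvalues 1, 1, -1, -1, σ₂/σ₁, σ₁/σ₂ respectively. -/
import Mathlib

open Matrix

/-- Hessian of I₃ in the SVD frame, as a map on 3×2 matrices. -/
noncomputable def H3 (U : Matrix (Fin 3) (Fin 3) ℝ) (V : Matrix (Fin 2) (Fin 2) ℝ)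
    (σ₁ σ₂ : ℝ) (A : Matrix (Fin 3) (Fin 2) ℝ) : Matrix (Fin 3) (Fin 2) ℝ :=
  let M := Uᵀ * A * V
  U * !![M 1 1, -M 1 0; -M 0 1, M 0 0;
         (σ₂ / σ₁) * M 2 0, (σ₁ / σ₂) * M 2 1] * Vᵀ

lemma H3_smul (U : Matrix (Fin 3) (Fin 3) ℝ) (V : Matrix (Fin 2) (Fin 2) ℝ)
    (σ₁ σ₂ c : ℝ) (A : Matrix (Fin 3) (Fin 2) ℝ) :
    H3 U V σ₁ σ₂ (c • A) = c • H3 U V σ₁ σ₂ A := by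
  simp only [H3, Matrix.mul_smul, Matrix.smul_mul]
  have h : (!![(c • (Uᵀ * A * V)) 1 1, -(c • (Uᵀ * A * V)) 1 0;
      -(c • (Uᵀ * A * V)) 0 1, (c • (Uᵀ * A * V)) 0 0;
      σ₂ / σ₁ * (c • (Uᵀ * A * V)) 2 0, σ₁ / σ₂ * (c • (Uᵀ * A * V)) 2 1]
      : Matrix (Fin 3) (Fin 2) ℝ) =
      c • !![(Uᵀ * A * V) 1 1, -(Uᵀ * A * V) 1 0;
      -(Uᵀ * A * V) 0 1, (Uᵀ * A * V) 0 0;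
      σ₂ / σ₁ * (Uᵀ * A * V) 2 0, σ₁ / σ₂ * (Uᵀ * A * V) 2 1] := by
    ext i j; fin_cases i <;> fin_cases j <;> simp [Matrix.smul_apply] <;> ring
  rw [h, Matrix.mul_smul, Matrix.smul_mul]

lemma H3_eig (U : Matrix (Fin 3) (Fin 3) ℝ) (V : Matrix (Fin 2) (Fin 2) ℝ)
    (hU : Uᵀ * U = 1) (hV : Vᵀ * V = 1) (σ₁ σ₂ lam : ℝ)
    (B : Matrix (Fin 3) (Fin 2) ℝ)
    (hB : !![B 1 1, -B 1 0; -B 0 1, B 0 0;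
         (σ₂ / σ₁) * B 2 0, (σ₁ / σ₂) * B 2 1] = lam • B) :
    H3 U V σ₁ σ₂ (U * B * Vᵀ) = lam • (U * B * Vᵀ) := by
  have key : Uᵀ * (U * B * Vᵀ) * V = B := by
    rw [← Matrix.mul_assoc, ← Matrix.mul_assoc, hU, Matrix.one_mul,
      Matrix.mul_assoc, hV, Matrix.mul_one]
  simp only [H3, key, hB, Matrix.smul_mul, Matrix.mul_smul]

theorem H3_eigenmatrices (U : Matrix (Fin 3) (Fin 3) ℝ) (V : Matrix (Fin 2) (Fin 2) ℝ)
    (hU : Uᵀ * U = 1) (hV : Vᵀ * V = 1) (σ₁ σ₂ : ℝ) (hσ₁ : 0 < σ₁) (hσ₂ : 0 < σ₂) :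
    H3 U V σ₁ σ₂ ((1 / Real.sqrt 2) • (U * !![(1:ℝ), 0; 0, 1; 0, 0] * Vᵀ))
        = (1 : ℝ) • ((1 / Real.sqrt 2) • (U * !![(1:ℝ), 0; 0, 1; 0, 0] * Vᵀ))
    ∧ H3 U V σ₁ σ₂ ((1 / Real.sqrt 2) • (U * !![(0:ℝ), -1; 1, 0; 0, 0] * Vᵀ))
        = (1 : ℝ) • ((1 / Real.sqrt 2) • (U * !![(0:ℝ), -1; 1, 0; 0, 0] * Vᵀ))
    ∧ H3 U V σ₁ σ₂ ((1 / Real.sqrt 2) • (U * !![(1:ℝ), 0; 0, -1; 0, 0] * Vᵀ))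
        = (-1 : ℝ) • ((1 / Real.sqrt 2) • (U * !![(1:ℝ), 0; 0, -1; 0, 0] * Vᵀ))
    ∧ H3 U V σ₁ σ₂ ((1 / Real.sqrt 2) • (U * !![(0:ℝ), 1; 1, 0; 0, 0] * Vᵀ))
        = (-1 : ℝ) • ((1 / Real.sqrt 2) • (U * !![(0:ℝ), 1; 1, 0; 0, 0] * Vᵀ))
    ∧ H3 U V σ₁ σ₂ (U * !![(0:ℝ), 0; 0, 0; 1, 0] * Vᵀ)
        = (σ₂ / σ₁) • (U * !![(0:ℝ), 0; 0, 0; 1, 0] * Vᵀ)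
    ∧ H3 U V σ₁ σ₂ (U * !![(0:ℝ), 0; 0, 0; 0, 1] * Vᵀ)
        = (σ₁ / σ₂) • (U * !![(0:ℝ), 0; 0, 0; 0, 1] * Vᵀ) := by
  refine ⟨?_, ?_, ?_, ?_, ?_, ?_⟩
  · rw [H3_smul, H3_eig U V hU hV σ₁ σ₂ 1 _ (by
      ext i j; fin_cases i <;> fin_cases j <;> simp [Matrix.vecHead, Matrix.vecTail]), smul_comm]
  · rw [H3_smul, H3_eig U V hU hV σ₁ σ₂ 1 _ (by
      ext i j; fin_cases i <;> fin_cases j <;> simp [Matrix.vecHead, Matrix.vecTail]), smul_comm]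
  · rw [H3_smul, H3_eig U V hU hV σ₁ σ₂ (-1) _ (by
      ext i j; fin_cases i <;> fin_cases j <;> simp [Matrix.vecHead, Matrix.vecTail]), smul_comm]
  · rw [H3_smul, H3_eig U V hU hV σ₁ σ₂ (-1) _ (by
      ext i j; fin_cases i <;> fin_cases j <;> simp [Matrix.vecHead, Matrix.vecTail]), smul_comm]
  · rw [H3_eig U V hU hV σ₁ σ₂ (σ₂ / σ₁) _ (by
      ext i j; fin_cases i <;> fin_cases j <;> simp [Matrix.vecHead, Matrix.vecTail])]
  · rw [H3_eig U V hU hV σ₁ σ₂ (σ₁ / σ₂) _ (by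
      ext i j; fin_cases i <;> fin_cases j <;> simp [Matrix.vecHead, Matrix.vecTail])]
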